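/- Let G be a connected simple graph, let k ≥ 2, and let T_1, …, T_k be completely independent spanning trees of G. For each i, let u_i be an internal vertex of T_i. In the graph G □ K_2 (the Cartesian product of G with an edge, consisting of two copies G^0 and G^1 of G joined by a perfect matching between corresponding vertices), let T̄_i be the spanning subgraph consisting of the copy of T_i inside G^0, the copy of T_i inside G^1, and the matching edge joining the two copies of u_i. Then T̄_1, …, T̄_k are completely independent spanning trees of G □ K_2. -/

import Mathlib

open SimpleGraph

/-- `T` is a spanning tree of `G`: a subgraph of `G` (on the same vertex set) that is a tree. -/
def IsSpanningTreeOf {V : Type*} (G T : SimpleGraph V) : Prop :=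
  T ≤ G ∧ T.IsTree

/-- A family of spanning trees of `G` are *completely independent* if for every pair of
distinct vertices `x ≠ y` and distinct indices `i ≠ j`, the (unique) paths from `x` to `y`
in `T i` and `T j` share no edges, and share no vertices except `x` and `y`. -/
def AreCISTs {V : Type*} {k : ℕ} (G : SimpleGraph V) (T : Fin k → SimpleGraph V) : Prop :=
  (∀ i, IsSpanningTreeOf G (T i)) ∧
  ∀ x y : V, x ≠ y → ∀ i j : Fin k, i ≠ j →
    ∀ p : (T i).Walk x y, ∀ q : (T j).Walk x y, p.IsPath → q.IsPath →
      (∀ e ∈ p.edges, e ∉ q.edges) ∧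
      (∀ v ∈ p.support, v ∈ q.support → v = x ∨ v = y)

/-- The `n`-dimensional hypercube: vertices are functions `Fin n → ZMod 2`, adjacent iff
they differ in exactly one coordinate. -/
def hypercube (n : ℕ) : SimpleGraph (Fin n → ZMod 2) where
  Adj x y := hammingDist x y = 1
  symm := ⟨fun x y h => by show hammingDist y x = 1; rw [hammingDist_comm]; exact h⟩
  loopless := ⟨fun x h => by simp [hammingDist_self] at h⟩

/-- `G` is `k`-connected: it has more than `k` vertices and remains connected after
removing any set of fewer than `k` vertices. -/
def KConnected {V : Type*} (G : SimpleGraph V) (k : ℕ) : Prop :=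
  k < Nat.card V ∧
  ∀ s : Finset V, s.card < k → ((G.induce ((↑s : Set V)ᶜ))).Connected

/-- `G` is `k`-regular: every vertex has exactly `k` neighbours. -/
def IsKRegular {V : Type*} (G : SimpleGraph V) (k : ℕ) : Prop :=
  ∀ v : V, (G.neighborSet v).ncard = k

/-- Given a graph `T` on `V` and a distinguished vertex `u`, the spanning subgraph of
`T □ K₂` (on vertex set `V × Fin 2`) consisting of the two copies of `T` together with the
single matching edge joining the two copies of `u`. -/
def liftTree {V : Type*} (T : SimpleGraph V) (u : V) : SimpleGraph (V × Fin 2) where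
  Adj x y := (x.2 = y.2 ∧ T.Adj x.1 y.1) ∨ (x.1 = u ∧ y.1 = u ∧ x.2 ≠ y.2)
  symm := by
    constructor
    rintro ⟨a, b⟩ ⟨c, d⟩ (⟨h1, h2⟩ | ⟨h1, h2, h3⟩)
    · exact Or.inl ⟨h1.symm, h2.symm⟩
    · exact Or.inr ⟨h2, h1, h3.symm⟩
  loopless := by
    constructor
    rintro ⟨a, b⟩ (⟨_, h⟩ | ⟨_, _, h⟩)
    · exact T.loopless.irrefl a h
    · exact h rfl

/-!
By Hasunuma's characterization, spanning trees are completely independent iff they are pairwise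
edge-disjoint and no vertex is internal in two of them. The lift of a tree `T` at `u` is again a
tree: two copies of `T` joined by a single bridge. Its edges are the copies of the edges of `T`
together with the matching edge at `u`, so lifts of edge-disjoint trees at distinct vertices are
edge-disjoint; and if `(w, r)` is internal in the lift then `w` is internal in `T`, because the only
new edge sits at `u`, which is internal already. Both conditions therefore pass to the lifts
(`u i ≠ u j`, since `u i` and `u j` are internal in different trees).
-/

theorem Equivalence.exists_not_rel_and_not_rel {α : Type*} {r s : α → α → Prop}
    (hr : Equivalence r) (hs : Equivalence s) {a b c d : α} (hab : ¬r a b) (hcd : ¬s c d) :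
    ∃ x y, ¬r x y ∧ ¬s x y := by
  by_contra! h
  have hrcd : r c d := by_contra fun h' => hcd (h c d h')
  by_cases hca : r c a
  · have hcb : ¬r c b := fun hcb => hab (hr.trans (hr.symm hca) hcb)
    have hdb : ¬r d b := fun hdb => hcb (hr.trans hrcd hdb)
    exact hcd (hs.trans (h c b hcb) (hs.symm (h d b hdb)))
  · have hda : ¬r d a := fun hda => hca (hr.trans hrcd hda)
    exact hcd (hs.trans (h c a hca) (hs.symm (h d a hda)))

namespace SimpleGraph

variable {V : Type*} {G H H' : SimpleGraph V}

theorem Reachable.apply_eq_of_forall_adj {β : Type*} {f : V → β}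
    (hf : ∀ x y, G.Adj x y → f x = f y) {x y : V} (h : G.Reachable x y) : f x = f y := by
  obtain ⟨p⟩ := h
  induction p with
  | nil => rfl
  | cons hadj _ ih => exact (hf _ _ hadj).trans ih

theorem Walk.IsPath.neighborSet_nontrivial_of_mem_support {x y v : V} {p : G.Walk x y}
    (hp : p.IsPath) (hv : v ∈ p.support) (hvx : v ≠ x) (hvy : v ≠ y) :
    (G.neighborSet v).Nontrivial := by
  obtain ⟨q, r, -, -, rfl⟩ := hp.mem_support_iff_exists_append.mp hv
  have hq : ¬q.Nil := fun h => hvx (h.eq).symm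
  have hr : ¬r.Nil := fun h => hvy h.eq
  exact ⟨q.penultimate, (q.adj_penultimate hq).symm, r.snd, r.adj_snd hr,
    hp.ne_of_mem_support_of_append (r.adj_snd hr).ne' (q.getVert_mem_support _)
      (r.getVert_mem_support _)⟩

theorem mem_support_of_not_reachable_induce_compl {v : V} {x y : ↥({v}ᶜ : Set V)}
    (h : ¬(G.induce {v}ᶜ).Reachable x y) (p : G.Walk x y) : v ∈ p.support := by
  by_contra hv
  exact h ⟨p.induce {v}ᶜ fun w hw hwv => hv (hwv ▸ hw)⟩

theorem IsAcyclic.not_reachable_induce_compl_of_adj (hG : G.IsAcyclic) {v : V}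
    {a b : ↥({v}ᶜ : Set V)} (ha : G.Adj v a) (hb : G.Adj v b) (hab : (a : V) ≠ b) :
    ¬(G.induce {v}ᶜ).Reachable a b := by
  intro h
  obtain ⟨p, hp⟩ := h.exists_isPath
  have hvp : v ∉ (p.map (Embedding.induce _).toHom).support := by
    rw [Walk.support_map, List.mem_map]
    rintro ⟨w, -, hw⟩
    exact w.2 hw
  exact hvp (hG.mem_support_of_ne_mem_support_of_adj_of_isPath
    (hp.map (Embedding.induce (G := G) _).injective) (Path.singleton ha.symm).2 hb.symm
    (by simpa using ⟨hab.symm, hb.ne'⟩))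

def CompletelyIndependent (H H' : SimpleGraph V) : Prop :=
  ∀ x y : V, x ≠ y → ∀ (p : H.Walk x y) (q : H'.Walk x y), p.IsPath → q.IsPath →
    (∀ e ∈ p.edges, e ∉ q.edges) ∧ (∀ v ∈ p.support, v ∈ q.support → v = x ∨ v = y)

theorem areCISTs_iff {k : ℕ} {T : Fin k → SimpleGraph V} :
    AreCISTs G T ↔
      (∀ i, IsSpanningTreeOf G (T i)) ∧ Pairwise fun i j => CompletelyIndependent (T i) (T j) :=
  and_congr_right' ⟨fun h i j hij x y hxy => h x y hxy i j hij,
    fun h x y hxy _ _ hij => h hij x y hxy⟩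

theorem CompletelyIndependent.disjoint (h : CompletelyIndependent H H') : Disjoint H H' := by
  refine disjoint_left.mpr fun a b ha hb => ?_
  exact (h a b ha.ne _ _ (Path.singleton ha).2 (Path.singleton hb).2).1 s(a, b) (by simp) (by simp)

/-- In a tree, deleting an internal vertex separates two of its neighbours; for two trees
these separations have a common witness pair `z, w`, and then `v` is an inner vertex of both
`z`–`w` paths. -/
theorem CompletelyIndependent.not_nontrivial_neighborSet (h : CompletelyIndependent H H')
    (hH : H.IsTree) (hH' : H'.IsTree) {v : V} (hv : (H.neighborSet v).Nontrivial) :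
    ¬(H'.neighborSet v).Nontrivial := by
  rintro ⟨c, hc, d, hd, hcd⟩
  obtain ⟨a, ha, b, hb, hab⟩ := hv
  obtain ⟨z, w, hzw, hzw'⟩ := Equivalence.exists_not_rel_and_not_rel
    (reachable_is_equivalence _) (reachable_is_equivalence _)
    (hH.isAcyclic.not_reachable_induce_compl_of_adj (a := ⟨a, ha.ne'⟩) (b := ⟨b, hb.ne'⟩)
      ha hb hab)
    (hH'.isAcyclic.not_reachable_induce_compl_of_adj (a := ⟨c, hc.ne'⟩) (b := ⟨d, hd.ne'⟩)
      hc hd hcd)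
  have hne : (z : V) ≠ w := fun heq => hzw (Subtype.ext heq ▸ Reachable.refl _)
  obtain ⟨p, hp⟩ := hH.connected.exists_isPath (z : V) w
  obtain ⟨q, hq⟩ := hH'.connected.exists_isPath (z : V) w
  rcases (h z w hne p q hp hq).2 v (mem_support_of_not_reachable_induce_compl hzw p)
    (mem_support_of_not_reachable_induce_compl hzw' q) with hvz | hvw
  · exact z.2 hvz.symm
  · exact w.2 hvw.symm

theorem completelyIndependent_of_disjoint (hd : Disjoint H H')
    (hint : ∀ v, (H.neighborSet v).Nontrivial → ¬(H'.neighborSet v).Nontrivial) :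
    CompletelyIndependent H H' := by
  refine fun x y hxy p q hp hq => ⟨fun e hep heq => ?_, fun v hvp hvq => ?_⟩
  · exact (disjoint_edgeSet.mpr hd).ne_of_mem (p.edges_subset_edgeSet hep)
      (q.edges_subset_edgeSet heq) rfl
  · by_contra! hv
    exact hint v (hp.neighborSet_nontrivial_of_mem_support hvp hv.1 hv.2)
      (hq.neighborSet_nontrivial_of_mem_support hvq hv.1 hv.2)

end SimpleGraph

section liftTree

variable {V : Type*} {T T' : SimpleGraph V} {u u' : V}

theorem liftTree_le_boxProd {G : SimpleGraph V} (h : T ≤ G) :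
    liftTree T u ≤ G □ (⊤ : SimpleGraph (Fin 2)) := by
  rintro ⟨a, s⟩ ⟨b, t⟩ (⟨hst, hab⟩ | ⟨rfl, rfl, hst⟩)
  · exact boxProd_adj.mpr (Or.inl ⟨h hab, hst⟩)
  · exact boxProd_adj.mpr (Or.inr ⟨hst, rfl⟩)

theorem liftTree_connected (hT : T.Connected) : (liftTree T u).Connected := by
  have side (s : Fin 2) {x y : V} (h : T.Reachable x y) :
      (liftTree T u).Reachable (x, s) (y, s) :=
    h.map ⟨fun v => (v, s), fun h => Or.inl ⟨rfl, h⟩⟩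
  have cross (s t : Fin 2) : (liftTree T u).Reachable (u, s) (u, t) := by
    by_cases hst : s = t
    · rw [hst]
    · exact Adj.reachable (Or.inr ⟨rfl, rfl, hst⟩)
  have := hT.nonempty
  refine Connected.mk fun ⟨x, s⟩ ⟨y, t⟩ => ?_
  exact ((side s (hT x u)).trans (cross s t)).trans (side t (hT u y))

/-- Every edge is a bridge. Deleting the matching edge leaves the two sides disconnected;
deleting a side edge `(a, s)(b, s)` separates `a` from `b` in `T`, and the component of `a`
there, extended by the whole other side (which hangs on `u`), separates `(a, s)` from `(b, s)`. -/
theorem liftTree_isAcyclic (hT : T.IsAcyclic) : (liftTree T u).IsAcyclic := by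
  refine isAcyclic_iff_forall_adj_isBridge.mpr ?_
  rintro ⟨a, s⟩ ⟨b, t⟩ (⟨rfl, hab⟩ | ⟨rfl, rfl, hst⟩) <;> rw [isBridge_iff]
  · have hbr := isBridge_iff.mp (isAcyclic_iff_forall_adj_isBridge.mp hT hab)
    set T₀ := T.deleteEdges {s(a, b)}
    let f (x : V × Fin 2) : Prop := T₀.Reachable a (if x.2 = s then x.1 else u)
    refine fun h => hbr ?_
    have key : f (a, s) = f (b, s) := h.apply_eq_of_forall_adj ?_
    · simpa [f] using key
    rintro ⟨c, r⟩ ⟨d, r'⟩ hcd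
    rw [deleteEdges_adj] at hcd
    obtain ⟨⟨rfl, hcd⟩ | ⟨rfl, rfl, -⟩, hne⟩ := hcd
    · by_cases hr : r = s
      · subst hr
        have hcd₀ : T₀.Adj c d := deleteEdges_adj.mpr ⟨hcd, by simpa [Sym2.eq_iff] using hne⟩
        simpa [f] using ⟨(·.trans hcd₀.reachable), (·.trans hcd₀.symm.reachable)⟩
      · simp [f, hr]
    · simp [f]
  · intro h
    refine hst (h.apply_eq_of_forall_adj (f := Prod.snd) ?_)
    rintro ⟨c, r⟩ ⟨d, r'⟩ hcd
    rw [deleteEdges_adj] at hcd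
    obtain ⟨⟨hr, -⟩ | ⟨rfl, rfl, hr⟩, hne⟩ := hcd
    · exact hr
    · have hpair : ∀ a b c d : Fin 2, a ≠ b → c ≠ d → (a = c ∧ b = d) ∨ (a = d ∧ b = c) := by decide
      exact absurd (by rcases hpair r r' s t hr hst with ⟨rfl, rfl⟩ | ⟨rfl, rfl⟩ <;> simp) hne

theorem IsSpanningTreeOf.liftTree {G : SimpleGraph V} (h : IsSpanningTreeOf G T) :
    IsSpanningTreeOf (G □ (⊤ : SimpleGraph (Fin 2))) (liftTree T u) :=
  ⟨liftTree_le_boxProd h.1, liftTree_connected h.2.connected, liftTree_isAcyclic h.2.isAcyclic⟩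

theorem liftTree_disjoint (h : Disjoint T T') (hu : u ≠ u') :
    Disjoint (liftTree T u) (liftTree T' u') := by
  refine disjoint_left.mpr ?_
  rintro ⟨a, s⟩ ⟨b, t⟩ (⟨-, hab⟩ | ⟨ha, -, hst⟩) (⟨hst', hab'⟩ | ⟨ha', hb', -⟩)
  · exact disjoint_left.mp h a b hab hab'
  · exact hab.ne (ha'.trans hb'.symm)
  · exact hst hst'
  · exact hu (ha.symm.trans ha')

theorem neighborSet_nontrivial_of_liftTree (hu : (T.neighborSet u).Nontrivial) {w : V}
    {r : Fin 2} (h : ((liftTree T u).neighborSet (w, r)).Nontrivial) :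
    (T.neighborSet w).Nontrivial := by
  by_cases hw : w = u
  · exact hw ▸ hu
  obtain ⟨⟨a, s⟩, ha | ha, ⟨b, t⟩, hb | hb, hab⟩ := h
  · exact ⟨a, ha.2, b, hb.2, fun h => hab (by simp_all)⟩
  all_goals exact absurd (by simp_all) hw

theorem CompletelyIndependent.liftTree (h : CompletelyIndependent T T') (hT : T.IsTree)
    (hT' : T'.IsTree) (hu : (T.neighborSet u).Nontrivial) (hu' : (T'.neighborSet u').Nontrivial) :
    CompletelyIndependent (liftTree T u) (liftTree T' u') := by
  have hexcl := fun v => h.not_nontrivial_neighborSet hT hT' (v := v)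
  refine completelyIndependent_of_disjoint (liftTree_disjoint h.disjoint ?_) ?_
  · exact fun heq => hexcl u hu (heq ▸ hu')
  · rintro ⟨w, r⟩ hw hw'
    exact hexcl w (neighborSet_nontrivial_of_liftTree hu hw)
      (neighborSet_nontrivial_of_liftTree hu' hw')

end liftTree

theorem lifted_trees_are_cists_general {V : Type*} {k : ℕ}
    (G : SimpleGraph V)
    (T : Fin k → SimpleGraph V) (hcist : AreCISTs G T)
    (u : Fin k → V) (hu : ∀ i, 2 ≤ ((T i).neighborSet (u i)).ncard) :
    AreCISTs (G □ (⊤ : SimpleGraph (Fin 2))) (fun i => liftTree (T i) (u i)) := by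
  obtain ⟨hspan, hind⟩ := areCISTs_iff.mp hcist
  have hinternal i : ((T i).neighborSet (u i)).Nontrivial :=
    (Set.one_lt_ncard_iff_nontrivial_and_finite.mp (hu i)).1
  exact areCISTs_iff.mpr ⟨fun i => (hspan i).liftTree,
    fun i j hij => CompletelyIndependent.liftTree (hind hij) (hspan i).2 (hspan j).2
      (hinternal i) (hinternal j)⟩

/-- (Corollary for constructing CISTs by doubling.) Let `T 1, …, T k` (`k ≥ 2`) be
completely independent spanning trees of a connected graph `G` and, for each `i`, let
`u i` be an internal vertex of `T i`. Then the trees obtained by joining the two copies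
of `T i` in `G □ K₂` by the matching edge at `u i` are completely independent spanning
trees of `G □ K₂`. -/
theorem lifted_trees_are_cists {V : Type*} {k : ℕ} (hk : 2 ≤ k)
    (G : SimpleGraph V) (hG : G.Connected)
    (T : Fin k → SimpleGraph V) (hcist : AreCISTs G T)
    (u : Fin k → V) (hu : ∀ i, 2 ≤ ((T i).neighborSet (u i)).ncard) :
    AreCISTs (G □ (⊤ : SimpleGraph (Fin 2))) (fun i => liftTree (T i) (u i)) :=
  lifted_trees_are_cists_general G T hcist u hu
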